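/- Let σ, b⁰, B : ℝ → ℝ be continuous with σ > 0, and let ξ : ℝ → (0, ∞) be a C¹ solution of −σ(s)ξ(s)³ + b⁰(s)ξ(s) + B(s)ξ'(s) = 0, and set φ = −ξ². Then the function Q⁰(ζ, s) = −√(2/π) ∫₀^{ξ(s)ζ} e^{−z²/2} dz satisfies the boundary-layer equation σ(s) ∂²Q⁰/∂ζ² − ζ[b⁰(s) + 2σ(s)φ(s)] ∂Q⁰/∂ζ − B(s) ∂Q⁰/∂s = 0 for all ζ ∈ ℝ and s ∈ ℝ, together with the boundary condition Q⁰(0, s) = 0 and the matching condition lim_{ζ→−∞} Q⁰(ζ, s) = 1 for every s. -/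

import Mathlib

/-!
`Q⁰(·, s)` is a rescaled error-function profile, so its partial derivatives come from the
fundamental theorem of calculus and the chain rule: `∂²Q⁰/∂ζ² = −ξ²ζ ∂Q⁰/∂ζ` and
`∂Q⁰/∂s = (ξ'/ξ) ζ ∂Q⁰/∂ζ`. Substituting these, the left side of the boundary-layer equation is
`−(ζ/ξ) ∂Q⁰/∂ζ` times the Bernoulli expression `−σξ³ + b⁰ξ + Bξ'`, hence zero. As `ζ → −∞` the
integral tends to minus the half Gaussian integral `√(2π)/2`, and `√(2/π) · √(2π)/2 = 1`.
-/

open Filter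

/-- The boundary-layer function `Q⁰(ζ, s) = −√(2/π) ∫₀^{ξ(s)ζ} e^{−z²/2} dz`. -/
noncomputable def Q0 (ξ : ℝ → ℝ) (ζ s : ℝ) : ℝ :=
  -Real.sqrt (2 / Real.pi) * ∫ z in (0 : ℝ)..(ξ s * ζ), Real.exp (-z ^ 2 / 2)

/-- `∂Q⁰/∂ζ = −√(2/π) ξ(s) e^{−(ξ(s)ζ)²/2}`. -/
noncomputable def Q0dζ (ξ : ℝ → ℝ) (ζ s : ℝ) : ℝ :=
  -Real.sqrt (2 / Real.pi) * ξ s * Real.exp (-(ξ s * ζ) ^ 2 / 2)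

/-- `∂²Q⁰/∂ζ² = √(2/π) ξ(s)³ ζ e^{−(ξ(s)ζ)²/2}`. -/
noncomputable def Q0dζζ (ξ : ℝ → ℝ) (ζ s : ℝ) : ℝ :=
  Real.sqrt (2 / Real.pi) * ξ s ^ 3 * ζ * Real.exp (-(ξ s * ζ) ^ 2 / 2)

/-- `∂Q⁰/∂s = −√(2/π) ξ'(s) ζ e^{−(ξ(s)ζ)²/2}`. -/
noncomputable def Q0ds (ξ ξ' : ℝ → ℝ) (ζ s : ℝ) : ℝ :=
  -Real.sqrt (2 / Real.pi) * ξ' s * ζ * Real.exp (-(ξ s * ζ) ^ 2 / 2)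

open Real MeasureTheory

lemma continuous_exp_neg_sq_div_two : Continuous fun z : ℝ => exp (-z ^ 2 / 2) := by
  fun_prop

lemma integrable_exp_neg_sq_div_two : Integrable fun z : ℝ => exp (-z ^ 2 / 2) := by
  convert integrable_exp_neg_mul_sq (b := 1 / 2) (by norm_num) using 3
  ring

lemma hasDerivAt_integral_exp_neg_sq_div_two (u : ℝ) :
    HasDerivAt (fun u => ∫ z in (0 : ℝ)..u, exp (-z ^ 2 / 2)) (exp (-u ^ 2 / 2)) u :=
  (continuous_exp_neg_sq_div_two.integral_hasStrictDerivAt 0 u).hasDerivAt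

lemma integral_Iic_zero_exp_neg_sq_div_two :
    ∫ z in Set.Iic (0 : ℝ), exp (-z ^ 2 / 2) = √(2 * π) / 2 := by
  have h := integral_comp_neg_Iic 0 fun z : ℝ => exp (-(1 / 2) * z ^ 2)
  simp only [neg_zero, neg_sq] at h
  convert h using 2 with z
  · ring_nf
  · rw [integral_gaussian_Ioi]; ring_nf

lemma tendsto_integral_exp_neg_sq_div_two_atBot :
    Tendsto (fun u => ∫ z in (0 : ℝ)..u, exp (-z ^ 2 / 2)) atBot (nhds (-(√(2 * π) / 2))) := by
  have h := (intervalIntegral_tendsto_integral_Iic 0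
    integrable_exp_neg_sq_div_two.integrableOn tendsto_id).neg
  rw [integral_Iic_zero_exp_neg_sq_div_two] at h
  exact h.congr fun u => by rw [id, intervalIntegral.integral_symm, neg_neg]

lemma sqrt_two_div_pi_mul_sqrt_two_mul_pi : √(2 / π) * √(2 * π) = 2 := by
  rw [← sqrt_mul (by positivity), show 2 / π * (2 * π) = 2 ^ 2 by field_simp,
    sqrt_sq zero_le_two]

section Q0

variable (ξ : ℝ → ℝ) (ζ s : ℝ)

lemma hasDerivAt_Q0_fst : HasDerivAt (fun z => Q0 ξ z s) (Q0dζ ξ ζ s) ζ := by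
  have h := ((hasDerivAt_integral_exp_neg_sq_div_two (ξ s * ζ)).comp ζ
    ((hasDerivAt_id ζ).const_mul (ξ s))).const_mul (-√(2 / π))
  refine h.congr_deriv ?_
  simp only [Q0dζ, mul_one]; ring

lemma hasDerivAt_Q0dζ_fst : HasDerivAt (fun z => Q0dζ ξ z s) (Q0dζζ ξ ζ s) ζ := by
  have h := ((((hasDerivAt_id ζ).const_mul (ξ s)).fun_pow 2).fun_neg.div_const 2).exp.const_mul
    (-√(2 / π) * ξ s)
  refine h.congr_deriv ?_
  simp only [Q0dζζ, id, mul_one]; ring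

lemma hasDerivAt_Q0_snd {ξ' : ℝ → ℝ} (hξ : HasDerivAt ξ (ξ' s) s) :
    HasDerivAt (fun t => Q0 ξ ζ t) (Q0ds ξ ξ' ζ s) s := by
  have h := ((hasDerivAt_integral_exp_neg_sq_div_two (ξ s * ζ)).comp s
    (hξ.mul_const ζ)).const_mul (-√(2 / π))
  refine h.congr_deriv ?_
  simp only [Q0ds]; ring

lemma Q0_boundary_layer_eq_zero {σ b₀ B ξ' : ℝ → ℝ}
    (hbern : -σ s * ξ s ^ 3 + b₀ s * ξ s + B s * ξ' s = 0) :
    σ s * Q0dζζ ξ ζ s - ζ * (b₀ s + 2 * σ s * (-ξ s ^ 2)) * Q0dζ ξ ζ s -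
      B s * Q0ds ξ ξ' ζ s = 0 := by
  simp only [Q0dζ, Q0dζζ, Q0ds]
  linear_combination √(2 / π) * ζ * exp (-(ξ s * ζ) ^ 2 / 2) * hbern

lemma Q0_zero_left : Q0 ξ 0 s = 0 := by
  simp [Q0]

lemma tendsto_Q0_atBot {s : ℝ} (hξ : 0 < ξ s) :
    Tendsto (fun z => Q0 ξ z s) atBot (nhds 1) := by
  have h := (tendsto_integral_exp_neg_sq_div_two_atBot.comp
    (tendsto_id.const_mul_atBot hξ)).const_mul (-√(2 / π))
  rwa [neg_mul_neg, ← mul_div_assoc, sqrt_two_div_pi_mul_sqrt_two_mul_pi, div_self two_ne_zero]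
    at h

end Q0

theorem boundary_layer_equation_general (σ b₀ B ξ ξ' : ℝ → ℝ)
    (hξ : ∀ s, HasDerivAt ξ (ξ' s) s) (hξpos : ∀ s, 0 < ξ s)
    (hbern : ∀ s, -σ s * ξ s ^ 3 + b₀ s * ξ s + B s * ξ' s = 0) :
    ∀ ζ s : ℝ,
      HasDerivAt (fun z => Q0 ξ z s) (Q0dζ ξ ζ s) ζ ∧
      HasDerivAt (fun z => Q0dζ ξ z s) (Q0dζζ ξ ζ s) ζ ∧
      HasDerivAt (fun t => Q0 ξ ζ t) (Q0ds ξ ξ' ζ s) s ∧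
      σ s * Q0dζζ ξ ζ s - ζ * (b₀ s + 2 * σ s * (-ξ s ^ 2)) * Q0dζ ξ ζ s -
          B s * Q0ds ξ ξ' ζ s = 0 ∧
      Q0 ξ 0 s = 0 ∧
      Tendsto (fun z => Q0 ξ z s) atBot (nhds 1) := fun ζ s =>
  ⟨hasDerivAt_Q0_fst ξ ζ s, hasDerivAt_Q0dζ_fst ξ ζ s, hasDerivAt_Q0_snd ξ ζ s (hξ s),
    Q0_boundary_layer_eq_zero ξ ζ s (hbern s), Q0_zero_left ξ s, tendsto_Q0_atBot ξ (hξpos s)⟩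

/-- With `ξ > 0` a `C¹` solution of the Bernoulli equation `−σξ³ + b⁰ξ + Bξ' = 0` and
`φ = −ξ²`, the function `Q⁰(ζ,s) = −√(2/π)∫₀^{ξ(s)ζ} e^{−z²/2} dz` satisfies the
boundary-layer equation
`σ(s)∂²Q⁰/∂ζ² − ζ[b⁰(s) + 2σ(s)φ(s)]∂Q⁰/∂ζ − B(s)∂Q⁰/∂s = 0`, the boundary condition
`Q⁰(0,s) = 0`, and the matching condition `Q⁰(ζ,s) → 1` as `ζ → −∞`. -/
theorem boundary_layer_equation (σ b₀ B ξ ξ' : ℝ → ℝ)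
    (hσc : Continuous σ) (hσ : ∀ s, 0 < σ s)
    (hξ : ∀ s, HasDerivAt ξ (ξ' s) s) (hξ'c : Continuous ξ') (hξpos : ∀ s, 0 < ξ s)
    (hbern : ∀ s, -σ s * ξ s ^ 3 + b₀ s * ξ s + B s * ξ' s = 0) :
    ∀ ζ s : ℝ,
      HasDerivAt (fun z => Q0 ξ z s) (Q0dζ ξ ζ s) ζ ∧
      HasDerivAt (fun z => Q0dζ ξ z s) (Q0dζζ ξ ζ s) ζ ∧
      HasDerivAt (fun t => Q0 ξ ζ t) (Q0ds ξ ξ' ζ s) s ∧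
      σ s * Q0dζζ ξ ζ s - ζ * (b₀ s + 2 * σ s * (-ξ s ^ 2)) * Q0dζ ξ ζ s -
          B s * Q0ds ξ ξ' ζ s = 0 ∧
      Q0 ξ 0 s = 0 ∧
      Tendsto (fun z => Q0 ξ z s) atBot (nhds 1) :=
  boundary_layer_equation_general σ b₀ B ξ ξ' hξ hξpos hbern
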